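/- Let a ≤ b be integers and let s be a positive differentiable function on the interval [a−1, b+1]. Suppose there exists c ∈ (a, b) such that s'(x) < 0 for all x ∈ [a−1, c) and s'(x) > 0 for all x ∈ (c, b+1]. Then Σ_{q=a}^{b} s(q) ≤ ∫_{a−1}^{b+1} s(x) dx. -/

import Mathlib

/-!
Let `m = ⌊c⌋`. On `[a - 1, m]` the function decreases, so `s q ≤ ∫_{q-1}^{q} s` for `a ≤ q ≤ m`;
on `[m + 1, b + 1]` it increases, so `s q ≤ ∫_{q}^{q+1} s` for `m < q ≤ b`. Summing, the two
halves of the sum are bounded by the integrals over `[a - 1, m]` and `[m + 1, b + 1]`, and the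
unit interval `[m, m + 1]` around the minimum that is left over contributes `∫_m^{m+1} s ≥ 0`.
-/

open MeasureTheory Set

theorem Int.sum_Icc_eq_sum_range {M : Type*} [AddCommMonoid M] (f : ℤ → M) (a b : ℤ) :
    ∑ q ∈ Finset.Icc a b, f q = ∑ i ∈ Finset.range (b + 1 - a).toNat, f (a + i) := by
  rw [Int.Icc_eq_finset_map, Finset.sum_map]
  rfl

section

variable {f : ℝ → ℝ} {a b : ℤ}

theorem AntitoneOn.sum_Icc_int_le_integral (hab : a ≤ b + 1)
    (hf : AntitoneOn f (Icc ((a : ℝ) - 1) b)) :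
    ∑ q ∈ Finset.Icc a b, f q ≤ ∫ x in ((a : ℝ) - 1)..b, f x := by
  have hn : ((a : ℝ) - 1) + (b + 1 - a).toNat = b := by
    rw [← Int.cast_natCast, Int.toNat_of_nonneg (by omega)]; push_cast; ring
  rw [Int.sum_Icc_eq_sum_range, ← hn]
  convert (hn ▸ hf).sum_le_integral using 2 with i
  push_cast
  congr 1
  ring

theorem MonotoneOn.sum_Icc_int_le_integral (hab : a ≤ b + 1)
    (hf : MonotoneOn f (Icc (a : ℝ) (b + 1))) :
    ∑ q ∈ Finset.Icc a b, f q ≤ ∫ x in (a : ℝ)..(b + 1), f x := by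
  have hn : (a : ℝ) + (b + 1 - a).toNat = b + 1 := by
    rw [← Int.cast_natCast, Int.toNat_of_nonneg (by omega)]; push_cast; ring
  rw [Int.sum_Icc_eq_sum_range, ← hn]
  convert (hn ▸ hf).sum_le_integral using 2 with i
  simp

theorem integral_add_integral_le_of_nonneg_on_gap {u v w z : ℝ} (huv : u ≤ v) (hvw : v ≤ w)
    (hwz : w ≤ z) (hf : IntervalIntegrable f volume u z) (hgap : ∀ x ∈ Icc v w, 0 ≤ f x) :
    (∫ x in u..v, f x) + ∫ x in w..z, f x ≤ ∫ x in u..z, f x := by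
  have huz : u ≤ z := huv.trans (hvw.trans hwz)
  have hsub : ∀ p ∈ Icc u z, ∀ q ∈ Icc u z, IntervalIntegrable f volume p q := fun p hp q hq =>
    hf.mono_set (uIcc_of_le huz ▸ uIcc_subset_Icc hp hq)
  have hv : v ∈ Icc u z := ⟨huv, hvw.trans hwz⟩
  have hw : w ∈ Icc u z := ⟨huv.trans hvw, hwz⟩
  rw [← intervalIntegral.integral_add_adjacent_intervals (hsub u (left_mem_Icc.2 huz) v hv)
      (hsub v hv z (right_mem_Icc.2 huz)),
    ← intervalIntegral.integral_add_adjacent_intervals (hsub v hv w hw)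
      (hsub w hw z (right_mem_Icc.2 huz))]
  linarith [intervalIntegral.integral_nonneg (μ := volume) hvw hgap]

theorem sum_Icc_int_le_integral_of_antitoneOn_of_monotoneOn {c : ℝ}
    (hc : c ∈ Ico ((a : ℝ) - 1) (b + 1)) (hanti : AntitoneOn f (Icc ((a : ℝ) - 1) c))
    (hmono : MonotoneOn f (Icc c ((b : ℝ) + 1)))
    (hnonneg : ∀ x ∈ Icc ((a : ℝ) - 1) (b + 1), 0 ≤ f x) :
    ∑ q ∈ Finset.Icc a b, f q ≤ ∫ x in ((a : ℝ) - 1)..(b + 1), f x := by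
  set m := ⌊c⌋
  have hmc : (m : ℝ) ≤ c := Int.floor_le c
  have hcm : c < m + 1 := Int.lt_floor_add_one c
  have ham : a - 1 ≤ m := Int.le_floor.2 (by push_cast; exact hc.1)
  have hmb : m ≤ b := Int.floor_le_iff.2 (by exact_mod_cast hc.2)
  have hleft : ∑ q ∈ Finset.Icc a m, f q ≤ ∫ x in ((a : ℝ) - 1)..m, f x :=
    (hanti.mono (Icc_subset_Icc_right hmc)).sum_Icc_int_le_integral (by omega)
  have hright : ∑ q ∈ Finset.Icc (m + 1) b, f q ≤ ∫ x in ((m : ℝ) + 1)..(b + 1), f x := by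
    simpa using (hmono.mono (Icc_subset_Icc_left (by push_cast; exact hcm.le))
      ).sum_Icc_int_le_integral (a := m + 1) (by omega)
  have hint : IntervalIntegrable f volume ((a : ℝ) - 1) (b + 1) :=
    (uIcc_of_le hc.1 ▸ hanti).intervalIntegrable.trans
      (uIcc_of_le hc.2.le ▸ hmono).intervalIntegrable
  have hamR : (a : ℝ) - 1 ≤ m := by exact_mod_cast ham
  have hmbR : (m : ℝ) ≤ b := by exact_mod_cast hmb
  have hgap := integral_add_integral_le_of_nonneg_on_gap hamR (le_add_of_nonneg_right zero_le_one)
    (by linarith) hint fun x hx => hnonneg x ⟨hamR.trans hx.1, by linarith [hx.2]⟩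
  have hsplit : Finset.Icc a b = Finset.Icc a m ∪ Finset.Icc (m + 1) b := by
    ext; simp only [Finset.mem_union, Finset.mem_Icc]; omega
  rw [hsplit, Finset.sum_union (Finset.disjoint_left.2 fun q h h' => by
    simp only [Finset.mem_Icc] at h h'; omega)]
  linarith

end

theorem sum_le_integral_of_unimodal
    (a b : ℤ) (s : ℝ → ℝ)
    (hpos : ∀ x ∈ Set.Icc ((a : ℝ) - 1) ((b : ℝ) + 1), 0 < s x)
    (hdiff : ∀ x ∈ Set.Icc ((a : ℝ) - 1) ((b : ℝ) + 1), DifferentiableAt ℝ s x)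
    (c : ℝ) (hc : c ∈ Set.Ioo (a : ℝ) (b : ℝ))
    (hdec : ∀ x ∈ Set.Ico ((a : ℝ) - 1) c, deriv s x < 0)
    (hinc : ∀ x ∈ Set.Ioc c ((b : ℝ) + 1), 0 < deriv s x) :
    ∑ q ∈ Finset.Icc a b, s (q : ℝ) ≤ ∫ x in ((a : ℝ) - 1)..((b : ℝ) + 1), s x := by
  have hcont : ContinuousOn s (Icc ((a : ℝ) - 1) (b + 1)) := fun x hx =>
    (hdiff x hx).continuousAt.continuousWithinAt
  have hanti : StrictAntiOn s (Icc ((a : ℝ) - 1) c) :=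
    strictAntiOn_of_deriv_neg (convex_Icc _ _)
      (hcont.mono (Icc_subset_Icc_right (by linarith [hc.2])))
      fun x hx => hdec x (Ioo_subset_Ico_self (by rwa [interior_Icc] at hx))
  have hmono : StrictMonoOn s (Icc c ((b : ℝ) + 1)) :=
    strictMonoOn_of_deriv_pos (convex_Icc _ _)
      (hcont.mono (Icc_subset_Icc_left (by linarith [hc.1])))
      fun x hx => hinc x (Ioo_subset_Ioc_self (by rwa [interior_Icc] at hx))
  exact sum_Icc_int_le_integral_of_antitoneOn_of_monotoneOn
    ⟨by linarith [hc.1], by linarith [hc.2]⟩ hanti.antitoneOn hmono.monotoneOn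
    fun x hx => (hpos x hx).le
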